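/- Let g > 0, N₀ > 0 and r ∈ ℝ. The set {(p, B) ∈ ℝ² : p ≥ 0, B > 0, and B·log₂(1 + g·p/(N₀·B)) ≥ r} is convex. -/

import Mathlib

/-!
The rate is the perspective `(p, B) ↦ B · h (p / B)` of the concave function
`h u = log₂ (1 + (g / N₀) u)` on `u ≥ 0`. Perspectives of concave functions are concave, and
superlevel sets of concave functions are convex.
-/

open Set

section Perspective

variable {E : Type*} [AddCommGroup E] [Module ℝ E]

noncomputable def perspective (f : E → ℝ) (x : E × ℝ) : ℝ := x.2 * f (x.2⁻¹ • x.1)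

lemma inv_smul_combo_eq {x y : E} {s t a b : ℝ} (hs : 0 < s) (ht : 0 < t)
    (hw : 0 < a * s + b * t) :
    (a * s + b * t)⁻¹ • (a • x + b • y) =
      (a * s / (a * s + b * t)) • (s⁻¹ • x) + (b * t / (a * s + b * t)) • (t⁻¹ • y) := by
  simp only [smul_smul, smul_add]
  congr 2 <;> field_simp

theorem ConcaveOn.perspective {s : Set E} {f : E → ℝ} (hf : ConcaveOn ℝ s f) :
    ConcaveOn ℝ {x : E × ℝ | 0 < x.2 ∧ x.2⁻¹ • x.1 ∈ s} (perspective f) := by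
  set D := {x : E × ℝ | 0 < x.2 ∧ x.2⁻¹ • x.1 ∈ s}
  have combo : ∀ ⦃p⦄, p ∈ D → ∀ ⦃q⦄, q ∈ D → ∀ ⦃a b : ℝ⦄, 0 ≤ a → 0 ≤ b → a + b = 1 →
      a • p + b • q ∈ D ∧
        a • _root_.perspective f p + b • _root_.perspective f q ≤
          _root_.perspective f (a • p + b • q) := by
    rintro ⟨x, t⟩ ⟨ht : 0 < t, hx : t⁻¹ • x ∈ s⟩ ⟨y, u⟩ ⟨hu : 0 < u, hy : u⁻¹ • y ∈ s⟩
      a b ha hb hab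
    have hw : 0 < a * t + b * u := convex_Ioi (0 : ℝ) ht hu ha hb hab
    have hα : 0 ≤ a * t / (a * t + b * u) := by positivity
    have hβ : 0 ≤ b * u / (a * t + b * u) := by positivity
    have hαβ : a * t / (a * t + b * u) + b * u / (a * t + b * u) = 1 := by field_simp
    simp only [D, _root_.perspective, Prod.smul_mk, Prod.mk_add_mk, smul_eq_mul, mem_ofPred_eq,
      inv_smul_combo_eq ht hu hw]
    refine ⟨⟨hw, hf.1 hx hy hα hβ hαβ⟩, ?_⟩
    calc a * (t * f (t⁻¹ • x)) + b * (u * f (u⁻¹ • y))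
        = (a * t + b * u) * (a * t / (a * t + b * u) * f (t⁻¹ • x)
            + b * u / (a * t + b * u) * f (u⁻¹ • y)) := by field_simp
      _ ≤ _ := mul_le_mul_of_nonneg_left (hf.2 hx hy hα hβ hαβ) hw.le
  exact ⟨fun p hp q hq a b ha hb hab ↦ (combo hp hq ha hb hab).1,
    fun p hp q hq a b ha hb hab ↦ (combo hp hq ha hb hab).2⟩

end Perspective

lemma concaveOn_logb_one_add_mul {b c : ℝ} (hb : 1 < b) (hc : 0 ≤ c) :
    ConcaveOn ℝ (Ici 0) (fun u ↦ Real.logb b (1 + c * u)) := by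
  have hlog : ConcaveOn ℝ (Ici 0) (fun u ↦ Real.log (1 + c * u)) := by
    refine (strictConcaveOn_log_Ioi.concaveOn.comp_affineMap
      (AffineMap.const ℝ ℝ (1 : ℝ) + c • AffineMap.id ℝ ℝ)).subset (fun u hu ↦ ?_) (convex_Ici 0)
    exact add_pos_of_pos_of_nonneg one_pos (mul_nonneg hc hu)
  simpa [Real.logb, div_eq_inv_mul] using hlog.smul (inv_nonneg.2 (Real.log_pos hb).le)

/-- The minimum-rate constraint set
{(p, B) : p ≥ 0, B > 0, B·log₂(1 + g·p/(N₀·B)) ≥ r} is convex for g > 0, N₀ > 0. -/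
theorem min_rate_constraint_set_convex (g N0 r : ℝ) (hg : 0 < g) (hN0 : 0 < N0) :
    Convex ℝ {x : ℝ × ℝ | 0 ≤ x.1 ∧ 0 < x.2 ∧
      r ≤ x.2 * Real.logb 2 (1 + g * x.1 / (N0 * x.2))} := by
  have hrate := (concaveOn_logb_one_add_mul one_lt_two (div_nonneg hg.le hN0.le)).perspective
  convert hrate.convex_ge r using 1
  ext ⟨p, B⟩
  have hsnr : g / N0 * (B⁻¹ * p) = g * p / (N0 * B) := by ring
  simp only [perspective, mem_ofPred_eq, mem_Ici, smul_eq_mul, hsnr]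
  constructor
  · rintro ⟨hp, hB, hr⟩
    exact ⟨⟨hB, by positivity⟩, hr⟩
  · rintro ⟨⟨hB, hp⟩, hr⟩
    exact ⟨(mul_nonneg_iff_of_pos_left (inv_pos.2 hB)).1 hp, hB, hr⟩
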